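/- arXiv:1512.07516 — 8 statements merged into one kernel-verified Lean document; each statement's English description precedes it below -/
import Mathlib

section
/- Let I be a finite index set and {(x_i, g_i, f_i)}_{i∈I} a set of triples with x_i ∈ E, g_i ∈ E, f_i ∈ ℝ. There exists a proper closed convex function F : E → ℝ ∪ {+∞} with F(x_i) = f_i and g_i ∈ ∂F(x_i) for all i ∈ I if and only if f_i − f_j − ⟨g_j, x_i − x_j⟩ ≥ 0 holds for all i, j ∈ I. -/
/-!
Necessity is the subgradient inequality of `g j` at `x j`, evaluated at `x i`. For sufficiency
take the pointwise maximum of the affine functions `f j + ⟪g j, · - x j⟫`: it is real-valued,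
convex and continuous, the interpolation inequalities say exactly that it takes the value `f i`
at `x i`, and then its `i`-th affine piece is a minorant touching it at `x i`, so `g i` is a
subgradient there.
-/

variable {E : Type*} [NormedAddCommGroup E] [InnerProductSpace ℝ E] [FiniteDimensional ℝ E]

def IsProperClosedConvex (f : E → EReal) : Prop :=
  (∃ x, f x ≠ ⊤) ∧ (∀ x, f x ≠ ⊥) ∧ LowerSemicontinuous f ∧
    ∀ x y : E, ∀ t : ℝ, 0 ≤ t → t ≤ 1 →
      f (t • x + (1 - t) • y) ≤ (t : EReal) * f x + ((1 - t : ℝ) : EReal) * f y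

def IsSubgradientAt (f : E → EReal) (x g : E) : Prop :=
  ∀ y, f x + ((inner ℝ g (y - x) : ℝ) : EReal) ≤ f y

open Finset Set

section

omit [FiniteDimensional ℝ E]

theorem ConvexOn.finset_sup' {𝕜 V β ι : Type*} [Semiring 𝕜] [PartialOrder 𝕜] [AddCommMonoid V]
    [LinearOrder β] [AddCommMonoid β] [IsOrderedAddMonoid β] [SMul 𝕜 V] [Module 𝕜 β]
    [PosSMulStrictMono 𝕜 β] {t : Set V} {s : Finset ι} (hne : s.Nonempty) {φ : ι → V → β}
    (hφ : ∀ i ∈ s, ConvexOn 𝕜 t (φ i)) : ConvexOn 𝕜 t (s.sup' hne φ) :=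
  Finset.sup'_induction hne φ (fun _ h₁ _ h₂ ↦ h₁.sup h₂) hφ

theorem convexOn_const_add_inner_sub (c : ℝ) (g x : E) :
    ConvexOn ℝ univ fun z ↦ c + inner ℝ g (z - x) := by
  refine (((innerₛₗ ℝ g).convexOn convex_univ).add_const (c - inner ℝ g x)).congr fun z _ ↦ ?_
  simp only [Pi.add_apply, innerₛₗ_apply_apply, inner_sub_right]
  ring

theorem IsProperClosedConvex.coe_real {F : E → ℝ} (hconv : ConvexOn ℝ univ F)
    (hlsc : LowerSemicontinuous F) : IsProperClosedConvex fun z ↦ (F z : EReal) := by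
  refine ⟨⟨0, EReal.coe_ne_top _⟩, fun _ ↦ EReal.coe_ne_bot _,
    continuous_coe_real_ereal.comp_lowerSemicontinuous hlsc EReal.coe_strictMono.monotone,
    fun a b t ht₀ ht₁ ↦ ?_⟩
  rw [← EReal.coe_mul, ← EReal.coe_mul, ← EReal.coe_add, EReal.coe_le_coe_iff]
  exact hconv.2 (mem_univ a) (mem_univ b) ht₀ (by linarith) (by ring)

theorem isSubgradientAt_coe_real_iff {F : E → ℝ} {x g : E} :
    IsSubgradientAt (fun z ↦ (F z : EReal)) x g ↔ ∀ y, F x + inner ℝ g (y - x) ≤ F y := by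
  simp only [IsSubgradientAt, ← EReal.coe_add, EReal.coe_le_coe_iff]

theorem IsSubgradientAt.add_inner_le {F : E → EReal} {x y g : E} {a b : ℝ}
    (h : IsSubgradientAt F x g) (hx : F x = a) (hy : F y = b) : a + inner ℝ g (y - x) ≤ b := by
  have := h y
  rwa [hx, hy, ← EReal.coe_add, EReal.coe_le_coe_iff] at this

section MaxAffine

variable {ι : Type*} [Fintype ι] [Nonempty ι] (x g : ι → E) (f : ι → ℝ)

noncomputable def maxAffine : E → ℝ :=
  univ.sup' univ_nonempty fun j z ↦ f j + inner ℝ (g j) (z - x j)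

theorem le_maxAffine (j : ι) (z : E) : f j + inner ℝ (g j) (z - x j) ≤ maxAffine x g f z := by
  rw [maxAffine, Finset.sup'_apply]
  exact le_sup' (fun j ↦ f j + inner ℝ (g j) (z - x j)) (mem_univ j)

theorem convexOn_maxAffine : ConvexOn ℝ univ (maxAffine x g f) :=
  ConvexOn.finset_sup' _ fun j _ ↦ convexOn_const_add_inner_sub (f j) (g j) (x j)

theorem continuous_maxAffine : Continuous (maxAffine x g f) :=
  Continuous.finset_sup' _ fun j _ ↦ by fun_prop

variable {x g f} in
theorem maxAffine_apply_eq (h : ∀ i j, 0 ≤ f i - f j - inner ℝ (g j) (x i - x j)) (i : ι) :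
    maxAffine x g f (x i) = f i := by
  refine le_antisymm ?_ (by simpa using le_maxAffine x g f i (x i))
  rw [maxAffine, Finset.sup'_apply]
  exact sup'_le _ _ fun j _ ↦ by linarith [h i j]

end MaxAffine

theorem exists_convexOn_continuous_interpolant {ι : Type*} [Fintype ι] {x g : ι → E}
    {f : ι → ℝ} (h : ∀ i j, 0 ≤ f i - f j - inner ℝ (g j) (x i - x j)) :
    ∃ F : E → ℝ, ConvexOn ℝ univ F ∧ Continuous F ∧
      ∀ i, F (x i) = f i ∧ ∀ y, F (x i) + inner ℝ (g i) (y - x i) ≤ F y := by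
  rcases isEmpty_or_nonempty ι with hι | hι
  · exact ⟨0, convexOn_const 0 convex_univ, continuous_const, isEmptyElim⟩
  · refine ⟨maxAffine x g f, convexOn_maxAffine x g f, continuous_maxAffine x g f,
      fun i ↦ ⟨maxAffine_apply_eq h i, fun y ↦ ?_⟩⟩
    rw [maxAffine_apply_eq h i]
    exact le_maxAffine x g f i y

end

/-- Interpolation by a proper closed convex function is possible iff the
subgradient inequalities hold for all pairs of data points. -/
theorem stmt1 {ι : Type*} [Fintype ι] (x g : ι → E) (f : ι → ℝ) :
    (∃ F : E → EReal, IsProperClosedConvex F ∧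
        ∀ i, F (x i) = ((f i : ℝ) : EReal) ∧ IsSubgradientAt F (x i) (g i)) ↔
      ∀ i j, 0 ≤ f i - f j - (inner ℝ (g j) (x i - x j) : ℝ) := by
  constructor
  · rintro ⟨F, -, hF⟩ i j
    linarith [(hF j).2.add_inner_le (hF j).1 (hF i).1]
  · intro h
    obtain ⟨F, hconv, hcont, hF⟩ := exists_convexOn_continuous_interpolant h
    exact ⟨fun z ↦ F z, .coe_real hconv hcont.lowerSemicontinuous,
      fun i ↦ ⟨congrArg _ (hF i).1, isSubgradientAt_coe_real_iff.2 (hF i).2⟩⟩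
end

section
/- Let μ ≥ 0, D > 0, and let {(x_i, g_i, f_i)}_{i∈I} be a finite set of triples in E × E × ℝ. There exists a μ-strongly convex proper closed function F : E → ℝ ∪ {+∞} whose effective domain is contained in the ball of radius D centered at the origin, with F(x_i) = f_i and g_i ∈ ∂F(x_i) for all i, if and only if for all i, j ∈ I: f_i − f_j − ⟨g_j, x_i − x_j⟩ ≥ (μ/2)‖x_i − x_j‖² and ‖x_j‖ ≤ D. -/
variable {E : Type*} [NormedAddCommGroup E] [InnerProductSpace ℝ E] [FiniteDimensional ℝ E]

/-- `f` is `μ`-strongly convex (i.e. `f - μ/2‖·‖²` is convex). -/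
def IsStronglyConvexWith (μ : ℝ) (f : E → EReal) : Prop :=
  ∀ x y : E, ∀ t : ℝ, 0 ≤ t → t ≤ 1 →
    f (t • x + (1 - t) • y) ≤
      (t : EReal) * f x + ((1 - t : ℝ) : EReal) * f y -
        ((μ / 2 * (t * (1 - t)) * ‖x - y‖ ^ 2 : ℝ) : EReal)

/-!
Necessity: the subgradient inequality at `x j`, evaluated at a point `t • x i + (1 - t) • x j`
of the segment and combined with strong convexity along it, gives
`(1 - t) * μ / 2 * ‖x i - x j‖ ^ 2 ≤ f i - f j - ⟪g j, x i - x j⟫`; let `t → 0`.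

Sufficiency: each quadratic model `f i + ⟪g i, z - x i⟫ + μ / 2 * ‖z - x i‖ ^ 2` is `μ`-strongly
convex, hence so is their maximum. Restricted to the (compact) convex hull of the `x i` and `⊤`
outside, it is proper, closed and `μ`-strongly convex; the interpolation inequalities say exactly
that the maximum equals `f i` at `x i`, where the `i`-th model, lying below it, makes `g i` a
subgradient. The hull lies in the ball of radius `D` because every `x i` does. Without data
points, the indicator of `{0}` serves.
-/

open Set Filter Topology Finset
open scoped RealInnerProductSpace

theorem UniformConvexOn.finset_sup' {V ι : Type*} [NormedAddCommGroup V] [NormedSpace ℝ V]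
    {s : Finset ι} (hs : s.Nonempty) {S : Set V} {φ : ℝ → ℝ} {q : ι → V → ℝ}
    (hq : ∀ i ∈ s, UniformConvexOn S φ (q i)) :
    UniformConvexOn S φ fun z => s.sup' hs (q · z) := by
  refine ⟨(hq _ hs.choose_spec).1, fun z hz w hw a b ha hb hab => sup'_le _ _ fun i hi => ?_⟩
  refine ((hq i hi).2 hz hw ha hb hab).trans ?_
  gcongr <;> exact le_sup' (q · _) hi

theorem strongConvexOn_singleton {V : Type*} [NormedAddCommGroup V] [NormedSpace ℝ V] (m : ℝ)
    (x₀ : V) (f : V → ℝ) : StrongConvexOn {x₀} m f :=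
  ⟨convex_singleton x₀, by
    rintro _ rfl _ rfl a b - - hab
    simp [← add_smul, ← add_mul, hab]⟩

section Extension

variable {V : Type*}

open Classical in
noncomputable def extendByTop (K : Set V) (h : V → ℝ) (z : V) : EReal :=
  if z ∈ K then (h z : EReal) else ⊤

variable {K : Set V} {h : V → ℝ} {z : V}

@[simp]
theorem extendByTop_of_mem (hz : z ∈ K) : extendByTop K h z = h z := if_pos hz

@[simp]
theorem extendByTop_of_notMem (hz : z ∉ K) : extendByTop K h z = ⊤ := if_neg hz

theorem extendByTop_ne_top_iff : extendByTop K h z ≠ ⊤ ↔ z ∈ K := by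
  by_cases hz : z ∈ K <;> simp [hz]

theorem extendByTop_ne_bot : extendByTop K h z ≠ ⊥ := by
  by_cases hz : z ∈ K <;> simp [hz]

theorem lowerSemicontinuous_extendByTop [TopologicalSpace V] (hK : IsClosed K)
    (hh : Continuous h) : LowerSemicontinuous (extendByTop K h) := by
  intro z c hc
  by_cases hz : z ∈ K
  · rw [extendByTop_of_mem hz] at hc
    filter_upwards [(continuous_coe_real_ereal.comp hh).lowerSemicontinuous z c hc] with w hw
    by_cases hw' : w ∈ K
    · simpa [hw'] using hw
    · simpa [hw'] using hw.trans_le le_top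
  · rw [extendByTop_of_notMem hz] at hc
    filter_upwards [hK.isOpen_compl.mem_nhds hz] with w hw
    rwa [extendByTop_of_notMem hw]

theorem coe_mul_extendByTop_ne_bot {s : ℝ} (hs : 0 < s) :
    (s : EReal) * extendByTop K h z ≠ ⊥ := by
  by_cases hz : z ∈ K
  · simp [hz, ← EReal.coe_mul]
  · simp [hz, EReal.coe_mul_top_of_pos hs]

theorem isStronglyConvexWith_extendByTop [NormedAddCommGroup V] [InnerProductSpace ℝ V] {μ : ℝ}
    (hh : StrongConvexOn K μ h) : IsStronglyConvexWith μ (extendByTop K h) := by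
  intro z w t ht0 ht1
  rcases ht0.eq_or_lt with rfl | ht0
  · simp
  rcases ht1.eq_or_lt with rfl | ht1
  · simp
  have ht1' : 0 < 1 - t := sub_pos.2 ht1
  by_cases hzw : z ∈ K ∧ w ∈ K
  · obtain ⟨hz, hw⟩ := hzw
    rw [extendByTop_of_mem hz, extendByTop_of_mem hw,
      extendByTop_of_mem (hh.1 hz hw ht0.le ht1'.le (by ring))]
    exact_mod_cast (hh.2 hz hw ht0.le ht1'.le (by ring)).trans_eq
      (by simp only [smul_eq_mul]; ring)
  suffices (t : EReal) * extendByTop K h z + ((1 - t : ℝ) : EReal) * extendByTop K h w = ⊤ by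
    rw [this, EReal.top_sub_coe]
    exact le_top
  rcases not_and_or.1 hzw with hz | hw
  · rw [extendByTop_of_notMem hz, EReal.coe_mul_top_of_pos ht0,
      EReal.top_add_of_ne_bot (coe_mul_extendByTop_ne_bot ht1')]
  · rw [extendByTop_of_notMem hw, EReal.coe_mul_top_of_pos ht1',
      EReal.add_top_of_ne_bot (coe_mul_extendByTop_ne_bot ht0)]

theorem isProperClosedConvex_extendByTop [NormedAddCommGroup V] [InnerProductSpace ℝ V]
    (hK : IsClosed K) (hne : K.Nonempty) (hh : ConvexOn ℝ K h) (hc : Continuous h) :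
    IsProperClosedConvex (extendByTop K h) := by
  refine ⟨⟨hne.some, extendByTop_ne_top_iff.2 hne.some_mem⟩, fun _ => extendByTop_ne_bot,
    lowerSemicontinuous_extendByTop hK hc, fun z w t ht0 ht1 => ?_⟩
  simpa using isStronglyConvexWith_extendByTop (strongConvexOn_zero.2 hh) z w t ht0 ht1

theorem isSubgradientAt_extendByTop [NormedAddCommGroup V] [InnerProductSpace ℝ V] {x g : V}
    (hx : x ∈ K) (hg : ∀ y ∈ K, h x + ⟪g, y - x⟫ ≤ h y) :
    IsSubgradientAt (extendByTop K h) x g := by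
  intro y
  by_cases hy : y ∈ K
  · rw [extendByTop_of_mem hx, extendByTop_of_mem hy]
    exact_mod_cast hg y hy
  · simp [hy]

end Extension

section Interpolant

variable {V : Type*} [NormedAddCommGroup V] [InnerProductSpace ℝ V] {μ : ℝ}

noncomputable def quadraticModel (μ c : ℝ) (g x₀ z : V) : ℝ :=
  c + ⟪g, z - x₀⟫ + μ / 2 * ‖z - x₀‖ ^ 2

theorem strongConvexOn_quadraticModel (c : ℝ) (g x₀ : V) {s : Set V} (hs : Convex ℝ s) :
    StrongConvexOn s μ (quadraticModel μ c g x₀) := by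
  have haffine : (fun z => quadraticModel μ c g x₀ z - μ / 2 * ‖z‖ ^ 2) =
      fun z => innerSL ℝ (g - μ • x₀) z + (c - ⟪g, x₀⟫ + μ / 2 * ‖x₀‖ ^ 2) := by
    ext z
    simp only [quadraticModel, innerSL_apply_apply, norm_sub_sq_real, inner_sub_left,
      inner_sub_right, real_inner_smul_left, real_inner_comm x₀ z]
    ring
  rw [strongConvexOn_iff_convex, haffine]
  exact ((innerSL ℝ (g - μ • x₀)).toLinearMap.convexOn hs).add_const _

theorem continuous_quadraticModel (c : ℝ) (g x₀ : V) : Continuous (quadraticModel μ c g x₀) := by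
  unfold quadraticModel
  fun_prop

theorem add_inner_le_quadraticModel (hμ : 0 ≤ μ) (c : ℝ) (g x₀ z : V) :
    c + ⟪g, z - x₀⟫ ≤ quadraticModel μ c g x₀ z :=
  le_add_of_nonneg_right (by positivity)

variable {ι : Type*} [Fintype ι] [Nonempty ι]

noncomputable def quadraticInterpolant (μ : ℝ) (x g : ι → V) (f : ι → ℝ) (z : V) : ℝ :=
  univ.sup' univ_nonempty fun i => quadraticModel μ (f i) (g i) (x i) z

variable {x g : ι → V} {f : ι → ℝ}

theorem quadraticModel_le_quadraticInterpolant (i : ι) (z : V) :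
    quadraticModel μ (f i) (g i) (x i) z ≤ quadraticInterpolant μ x g f z :=
  le_sup' (fun i => quadraticModel μ (f i) (g i) (x i) z) (mem_univ i)

theorem strongConvexOn_quadraticInterpolant {s : Set V} (hs : Convex ℝ s) :
    StrongConvexOn s μ (quadraticInterpolant μ x g f) :=
  UniformConvexOn.finset_sup' _ fun i _ => strongConvexOn_quadraticModel (f i) (g i) (x i) hs

theorem continuous_quadraticInterpolant : Continuous (quadraticInterpolant μ x g f) :=
  Continuous.finset_sup'_apply _ fun i _ => continuous_quadraticModel (f i) (g i) (x i)

theorem quadraticInterpolant_apply_self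
    (hfg : ∀ i j, μ / 2 * ‖x i - x j‖ ^ 2 ≤ f i - f j - ⟪g j, x i - x j⟫) (i : ι) :
    quadraticInterpolant μ x g f (x i) = f i := by
  refine le_antisymm (sup'_le _ _ fun j _ => ?_) ?_
  · simp only [quadraticModel]
    linarith [hfg i j]
  · calc f i = quadraticModel μ (f i) (g i) (x i) (x i) := by simp [quadraticModel]
      _ ≤ _ := quadraticModel_le_quadraticInterpolant i (x i)

theorem add_inner_le_quadraticInterpolant (hμ : 0 ≤ μ)
    (hfg : ∀ i j, μ / 2 * ‖x i - x j‖ ^ 2 ≤ f i - f j - ⟪g j, x i - x j⟫) (i : ι) (z : V) :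
    quadraticInterpolant μ x g f (x i) + ⟪g i, z - x i⟫ ≤ quadraticInterpolant μ x g f z := by
  rw [quadraticInterpolant_apply_self hfg]
  exact (add_inner_le_quadraticModel hμ _ _ _ _).trans (quadraticModel_le_quadraticInterpolant i z)

end Interpolant

section Necessity

variable {V : Type*} [NormedAddCommGroup V] [InnerProductSpace ℝ V] {μ : ℝ} {F : V → EReal}

theorem le_of_forall_one_sub_mul_le {r c : ℝ} (h : ∀ t ∈ Ioo (0 : ℝ) 1, (1 - t) * r ≤ c) :
    r ≤ c := by
  have hlim : Tendsto (fun t : ℝ => (1 - t) * r) (𝓝[>] 0) (𝓝 r) := by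
    have : Continuous fun t : ℝ => (1 - t) * r := by fun_prop
    simpa using this.continuousWithinAt (s := Ioi 0) (x := 0) |>.tendsto
  refine le_of_tendsto hlim ?_
  filter_upwards [Ioo_mem_nhdsGT one_pos] with t ht
  exact h t ht

theorem IsStronglyConvexWith.apply_combo_le (hF : IsStronglyConvexWith μ F) {x y : V} {a b : ℝ}
    (hx : F x = a) (hy : F y = b) {t : ℝ} (ht0 : 0 ≤ t) (ht1 : t ≤ 1) :
    F (t • x + (1 - t) • y) ≤
      ((t * a + (1 - t) * b - μ / 2 * (t * (1 - t)) * ‖x - y‖ ^ 2 : ℝ) : EReal) := by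
  simpa [hx, hy] using hF x y t ht0 ht1

theorem IsStronglyConvexWith.sq_le_of_isSubgradientAt (hF : IsStronglyConvexWith μ F)
    {x y g : V} {a b : ℝ} (hg : IsSubgradientAt F y g) (hx : F x = a) (hy : F y = b) :
    μ / 2 * ‖x - y‖ ^ 2 ≤ a - b - ⟪g, x - y⟫ := by
  refine le_of_forall_one_sub_mul_le fun t ht => ?_
  have hseg : (t • x + (1 - t) • y) - y = t • (x - y) := by module
  have hle : ((b + t * ⟪g, x - y⟫ : ℝ) : EReal) ≤
      ((t * a + (1 - t) * b - μ / 2 * (t * (1 - t)) * ‖x - y‖ ^ 2 : ℝ) : EReal) :=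
    calc ((b + t * ⟪g, x - y⟫ : ℝ) : EReal)
        = F y + ((⟪g, t • x + (1 - t) • y - y⟫ : ℝ) : EReal) := by
          rw [hy, hseg, real_inner_smul_right, EReal.coe_add]
      _ ≤ F (t • x + (1 - t) • y) := hg _
      _ ≤ _ := hF.apply_combo_le hx hy ht.1.le ht.2.le
  have hreal := EReal.coe_le_coe_iff.1 hle
  refine le_of_mul_le_mul_left ?_ ht.1
  nlinarith

end Necessity

/-- Interpolation by a `μ`-strongly convex proper closed function with domain contained
in the ball of radius `D` centered at the origin. -/
theorem stmt2 {ι : Type*} [Fintype ι] (μ D : ℝ) (hμ : 0 ≤ μ) (hD : 0 < D)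
    (x g : ι → E) (f : ι → ℝ) :
    (∃ F : E → EReal, IsProperClosedConvex F ∧ IsStronglyConvexWith μ F ∧
        (∀ z, F z ≠ ⊤ → ‖z‖ ≤ D) ∧
        ∀ i, F (x i) = ((f i : ℝ) : EReal) ∧ IsSubgradientAt F (x i) (g i)) ↔
      ∀ i j, μ / 2 * ‖x i - x j‖ ^ 2 ≤ f i - f j - (inner ℝ (g j) (x i - x j) : ℝ) ∧
        ‖x j‖ ≤ D := by
  constructor
  · rintro ⟨F, -, hF, hdom, hinterp⟩ i j
    exact ⟨hF.sq_le_of_isSubgradientAt (hinterp j).2 (hinterp i).1 (hinterp j).1,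
      hdom _ ((hinterp j).1 ▸ EReal.coe_ne_top _)⟩
  intro hyp
  rcases isEmpty_or_nonempty ι with hι | hι
  · have h0 := strongConvexOn_singleton μ (0 : E) 0
    refine ⟨extendByTop {0} 0, isProperClosedConvex_extendByTop isClosed_singleton
      (singleton_nonempty 0) (h0.convexOn fun r => by positivity) continuous_const,
      isStronglyConvexWith_extendByTop h0, fun z hz => ?_, isEmptyElim⟩
    rw [mem_singleton_iff.1 (extendByTop_ne_top_iff.1 hz), norm_zero]
    exact hD.le
  set K := convexHull ℝ (range x)
  have hxK (i : ι) : x i ∈ K := subset_convexHull ℝ _ (mem_range_self i)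
  have hKD : K ⊆ Metric.closedBall 0 D := convexHull_min
    (range_subset_iff.2 fun i => mem_closedBall_zero_iff.2 (hyp i i).2) (convex_closedBall 0 D)
  have hh := strongConvexOn_quadraticInterpolant (x := x) (g := g) (f := f) (μ := μ)
    (convex_convexHull ℝ (range x))
  refine ⟨extendByTop K (quadraticInterpolant μ x g f),
    isProperClosedConvex_extendByTop ((finite_range x).isCompact_convexHull ℝ).isClosed
      ⟨_, hxK (Classical.arbitrary ι)⟩ (hh.convexOn fun r => by positivity)
      continuous_quadraticInterpolant,
    isStronglyConvexWith_extendByTop hh,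
    fun z hz => mem_closedBall_zero_iff.1 (hKD (extendByTop_ne_top_iff.1 hz)),
    fun i => ⟨?_, isSubgradientAt_extendByTop (hxK i) fun y _ =>
      add_inner_le_quadraticInterpolant hμ (fun i j => (hyp i j).1) i y⟩⟩
  rw [extendByTop_of_mem (hxK i), quadraticInterpolant_apply_self (fun i j => (hyp i j).1)]
end

section
/- Let {(x_i, g_i, f_i)}_{i∈I} be a finite set of triples in E × E × ℝ. There exists a closed convex set Q ⊆ E (with indicator function I_Q, taking value 0 on Q and +∞ outside) such that x_i ∈ Q, I_Q(x_i) = f_i, and g_i is a subgradient of I_Q at x_i for all i ∈ I, if and only if for all i, j ∈ I: f_i = 0 and ⟨g_j, x_i − x_j⟩ ≤ 0. -/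
open scoped RealInnerProductSpace

section HalfSpace

variable {E : Type*} [NormedAddCommGroup E] [InnerProductSpace ℝ E]

theorem isClosed_setOf_inner_sub_nonpos (v a : E) : IsClosed {y : E | ⟪v, y - a⟫ ≤ 0} :=
  isClosed_le (by fun_prop) continuous_const

theorem convex_setOf_inner_sub_nonpos (v a : E) : Convex ℝ {y : E | ⟪v, y - a⟫ ≤ 0} := by
  simp only [inner_sub_right, sub_nonpos]
  exact convex_halfSpace_le (innerₛₗ ℝ v).isLinear _

end HalfSpace

theorem stmt5_general {E : Type*} [NormedAddCommGroup E] [InnerProductSpace ℝ E]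
    {ι : Type*} (x g : ι → E) (f : ι → ℝ) :
    (∃ Q : Set E, IsClosed Q ∧ Convex ℝ Q ∧
        ∀ i, x i ∈ Q ∧ f i = 0 ∧ ∀ y ∈ Q, (inner ℝ (g i) (y - x i) : ℝ) ≤ 0) ↔
      ∀ i j, f i = 0 ∧ (inner ℝ (g j) (x i - x j) : ℝ) ≤ 0 := by
  constructor
  · rintro ⟨Q, -, -, hQ⟩ i j
    exact ⟨(hQ i).2.1, (hQ j).2.2 (x i) (hQ i).1⟩
  · intro h
    -- the largest admissible `Q`: the intersection of the half-spaces cut out by the `g j`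
    refine ⟨⋂ j, {y | ⟪g j, y - x j⟫ ≤ 0},
      isClosed_iInter fun j => isClosed_setOf_inner_sub_nonpos _ _,
      convex_iInter fun j => convex_setOf_inner_sub_nonpos _ _, fun i => ?_⟩
    exact ⟨Set.mem_iInter.2 fun j => (h i j).2, (h i i).1, fun y hy => Set.mem_iInter.1 hy i⟩

/-- Interpolation by the indicator function of a closed convex set `Q`: the data
`(x_i, g_i, f_i)` is interpolable (with `x_i ∈ Q`, `I_Q(x_i) = f_i` and `g_i` in the
normal cone of `Q` at `x_i`, which characterizes subgradients of the indicator) iff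
`f_i = 0` and `⟨g_j, x_i − x_j⟩ ≤ 0` for all `i, j`. -/
theorem stmt5 {E : Type*} [NormedAddCommGroup E] [InnerProductSpace ℝ E]
    [FiniteDimensional ℝ E] {ι : Type*} [Fintype ι] (x g : ι → E) (f : ι → ℝ) :
    (∃ Q : Set E, IsClosed Q ∧ Convex ℝ Q ∧
        ∀ i, x i ∈ Q ∧ f i = 0 ∧ ∀ y ∈ Q, (inner ℝ (g i) (y - x i) : ℝ) ≤ 0) ↔
      ∀ i j, f i = 0 ∧ (inner ℝ (g j) (x i - x j) : ℝ) ≤ 0 :=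
  stmt5_general x g f
end

section
/- Let {(x_i, g_i, f_i)}_{i∈I} be a finite set of triples in E × E × ℝ satisfying f_i = 0, ⟨g_j, x_i − x_j⟩ ≤ 0 and ‖x_i‖ ≤ D for all i, j ∈ I. Then there exists a closed convex set Q contained in the closed ball of radius D centered at the origin, such that for all i: x_i ∈ Q and ⟨g_i, x − x_i⟩ ≤ 0 for all x ∈ Q. -/
/-! Take `Q` to be the convex hull of the points `x i`, cut down by the half-spaces
`⟪g j, y - x j⟫ ≤ 0`. The hull lies in the ball because the ball is convex, the interpolation
inequalities say precisely that every `x i` lies in each half-space, and lying in the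
half-space of index `i` is the normal-cone condition at `x i`. -/

open Set
open scoped RealInnerProductSpace

section SupportingHalfSpaces

variable {E : Type*} [NormedAddCommGroup E] [InnerProductSpace ℝ E] {ι : Type*}

def supportingPolyhedron (x g : ι → E) : Set E :=
  ⋂ j, {y | ⟪g j, y - x j⟫ ≤ 0}

theorem mem_supportingPolyhedron {x g : ι → E} {y : E} :
    y ∈ supportingPolyhedron x g ↔ ∀ j, ⟪g j, y - x j⟫ ≤ 0 :=
  mem_iInter

theorem isClosed_supportingPolyhedron (x g : ι → E) : IsClosed (supportingPolyhedron x g) :=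
  isClosed_iInter fun j => isClosed_le (by fun_prop) continuous_const

theorem convex_supportingPolyhedron (x g : ι → E) : Convex ℝ (supportingPolyhedron x g) := by
  refine convex_iInter fun j => ?_
  simp only [inner_sub_right, sub_nonpos]
  exact convex_halfSpace_le (innerₛₗ ℝ (g j)).isLinear _

end SupportingHalfSpaces

theorem stmt6_general {E : Type*} [NormedAddCommGroup E] [InnerProductSpace ℝ E]
    {ι : Type*} [Fintype ι] (D : ℝ)
    (x g : ι → E)
    (hineq : ∀ i j, (inner ℝ (g j) (x i - x j) : ℝ) ≤ 0)
    (hbound : ∀ i, ‖x i‖ ≤ D) :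
    ∃ Q : Set E, IsClosed Q ∧ Convex ℝ Q ∧ Q ⊆ Metric.closedBall (0 : E) D ∧
      ∀ i, x i ∈ Q ∧ ∀ y ∈ Q, (inner ℝ (g i) (y - x i) : ℝ) ≤ 0 := by
  refine ⟨convexHull ℝ (range x) ∩ supportingPolyhedron x g,
    ((finite_range x).isClosed_convexHull ℝ).inter (isClosed_supportingPolyhedron x g),
    (convex_convexHull ℝ _).inter (convex_supportingPolyhedron x g), ?_, fun i => ⟨?_, ?_⟩⟩
  · have hrange : range x ⊆ Metric.closedBall 0 D := by
      rintro _ ⟨i, rfl⟩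
      simpa using hbound i
    exact inter_subset_left.trans (convexHull_min hrange (convex_closedBall 0 D))
  · exact ⟨subset_convexHull ℝ _ (mem_range_self i), mem_supportingPolyhedron.2 (hineq i)⟩
  · exact fun y hy => mem_supportingPolyhedron.1 hy.2 i

/-- Sufficiency of the bounded-indicator interpolation conditions: there is a closed
convex set `Q` inside the ball of radius `D` containing all `x_i`, with each `g_i`
in the normal cone of `Q` at `x_i`. -/
theorem stmt6 {E : Type*} [NormedAddCommGroup E] [InnerProductSpace ℝ E]
    [FiniteDimensional ℝ E] {ι : Type*} [Fintype ι] (D : ℝ) (hD : 0 < D)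
    (x g : ι → E) (f : ι → ℝ)
    (hf : ∀ i, f i = 0)
    (hineq : ∀ i j, (inner ℝ (g j) (x i - x j) : ℝ) ≤ 0)
    (hbound : ∀ i, ‖x i‖ ≤ D) :
    ∃ Q : Set E, IsClosed Q ∧ Convex ℝ Q ∧ Q ⊆ Metric.closedBall (0 : E) D ∧
      ∀ i, x i ∈ Q ∧ ∀ y ∈ Q, (inner ℝ (g i) (y - x i) : ℝ) ≤ 0 :=
  stmt6_general D x g hineq hbound
end

section
/- Let N ≥ 1, R > 0, and positive step sizes α_1, …, α_N. Define F : ℝ → ℝ by F(x) = R|x| / (2 Σ_{k=1}^N α_k). Starting from x_0 = −R and defining x_k = x_{k−1} + α_k · R/(2 Σ_{j=1}^N α_j) for k = 1, …, N (which is a valid proximal point iteration x_k = prox_{α_k F}(x_{k−1}) since x_k = −R(1 − (Σ_{j=1}^k α_j)/(2 Σ_{j=1}^N α_j)) < 0 for all k ≤ N), the final iterate satisfies x_N = −R/2 and F(x_N) − min F = R² / (4 Σ_{k=1}^N α_k). -/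
open Finset

/-- Lower-bound instance for the proximal point algorithm: on the one-dimensional
function `F(x) = R|x|/(2 Σ α_k)`, starting from `x₀ = −R`, the proximal point
iterations (which here are the explicit steps `x_k = x_{k−1} + α_k R/(2 Σ α_j)`,
valid since all iterates stay negative) end at `x_N = −R/2` with
`F(x_N) − min F = R²/(4 Σ α_k)` (where `min F = F(0) = 0` since `0` minimizes `F`). -/
theorem stmt9 (N : ℕ) (hN : 1 ≤ N) (R : ℝ) (hR : 0 < R) (α : ℕ → ℝ)
    (hα : ∀ k, 1 ≤ k → k ≤ N → 0 < α k)
    (x : ℕ → ℝ) (hx0 : x 0 = -R)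
    (hrec : ∀ k, 1 ≤ k → k ≤ N →
      x k = x (k - 1) + α k * (R / (2 * ∑ j ∈ Icc 1 N, α j))) :
    (∀ k, k ≤ N → x k < 0) ∧
      x N = -R / 2 ∧
      (∀ y : ℝ, R * |(0 : ℝ)| / (2 * ∑ j ∈ Icc 1 N, α j) ≤
        R * |y| / (2 * ∑ j ∈ Icc 1 N, α j)) ∧
      R * |x N| / (2 * ∑ j ∈ Icc 1 N, α j) - R * |(0 : ℝ)| / (2 * ∑ j ∈ Icc 1 N, α j) =
        R ^ 2 / (4 * ∑ j ∈ Icc 1 N, α j) := by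
  set S := ∑ j ∈ Icc 1 N, α j with hS
  have hSpos : 0 < S :=
    Finset.sum_pos (fun i hi => hα i (mem_Icc.mp hi).1 (mem_Icc.mp hi).2)
      ⟨1, mem_Icc.mpr ⟨le_refl 1, hN⟩⟩
  have key : ∀ k, k ≤ N → x k = -R + (∑ j ∈ Icc 1 k, α j) * (R / (2 * S)) := by
    intro k
    induction k with
    | zero => intro _; simp [hx0]
    | succ n ih =>
      intro hk
      have hn : n ≤ N := Nat.le_of_succ_le hk
      have h := hrec (n + 1) (Nat.succ_le_succ (Nat.zero_le n)) hk
      rw [Nat.add_sub_cancel] at h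
      rw [h, ih hn, Finset.sum_Icc_succ_top (Nat.succ_le_succ (Nat.zero_le n))]
      ring
  have hle : ∀ k, k ≤ N → (∑ j ∈ Icc 1 k, α j) ≤ S := by
    intro k hk
    apply Finset.sum_le_sum_of_subset_of_nonneg (Finset.Icc_subset_Icc_right hk)
    intro i hi _
    exact (hα i (mem_Icc.mp hi).1 (mem_Icc.mp hi).2).le
  have hneg : ∀ k, k ≤ N → x k < 0 := by
    intro k hk
    rw [key k hk]
    have h1 : (∑ j ∈ Icc 1 k, α j) * (R / (2 * S)) ≤ S * (R / (2 * S)) := by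
      apply mul_le_mul_of_nonneg_right (hle k hk)
      positivity
    have h2 : S * (R / (2 * S)) = R / 2 := by field_simp
    nlinarith
  have hxN : x N = -R / 2 := by
    rw [key N le_rfl, ← hS]
    field_simp
    ring
  refine ⟨hneg, hxN, ?_, ?_⟩
  · intro y
    simp only [abs_zero, mul_zero, zero_div]
    positivity
  · rw [hxN]
    rw [abs_of_neg (by linarith : -R / 2 < (0 : ℝ))]
    simp only [abs_zero, mul_zero, zero_div, sub_zero]
    field_simp
    ring
end

section
/- Let N ≥ 1, R > 0, and α_1, …, α_N > 0. For any proper closed convex function F : E → ℝ ∪ {+∞} with minimizer x_*, and any sequence x_0, x_1, …, x_N with ‖x_0 − x_*‖ ≤ R and x_k = prox_{α_k F}(x_{k−1}) for each k, the final iterate satisfies F(x_N) − F(x_*) ≤ R² / (4 Σ_{k=1}^N α_k). -/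
/-!
With `T = α₁ + ⋯ + α_N` and `tₘ = α₁ + ⋯ + αₘ`, the Lyapunov function
`Φₘ = λ(tₘ) (F xₘ - F x⋆) + β(tₘ) ‖xₘ - x⋆‖²`, where `λ(t) = T t / (2T - t)` and
`β(t) = T (T - t) / (2T - t)²`, does not increase along the iterates. Since `λ(0) = 0`,
`β(0) = 1/4`, `λ(T) = T` and `β(T) = 0`, this gives `T (F x_N - F x⋆) ≤ ‖x₀ - x⋆‖² / 4`.
The decrease at step `m + 1` adds the subgradient inequality for `g_{m+1}` tested at `x⋆`, with
weight `λ(t_{m+1}) - λ(tₘ)`, and tested at `xₘ`, with weight `λ(tₘ)`; what remains is a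
quadratic form in `(xₘ - x⋆, g_{m+1})` whose discriminant vanishes for this choice of `λ, β`.
-/

open Finset

variable {E : Type*} [NormedAddCommGroup E] [InnerProductSpace ℝ E] [FiniteDimensional ℝ E]

open scoped RealInnerProductSpace

noncomputable section

def gapWeight (T t : ℝ) : ℝ := T * t / (2 * T - t)

def distWeight (T t : ℝ) : ℝ := T * (T - t) / (2 * T - t) ^ 2

variable {T t a : ℝ}

@[simp] theorem gapWeight_zero : gapWeight T 0 = 0 := by simp [gapWeight]

theorem gapWeight_self (hT : T ≠ 0) : gapWeight T T = T := by
  rw [gapWeight, two_mul, add_sub_cancel_right, mul_div_cancel_right₀ _ hT]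

@[simp] theorem distWeight_self : distWeight T T = 0 := by simp [distWeight]

theorem distWeight_zero (hT : T ≠ 0) : distWeight T 0 = 1 / 4 := by
  rw [distWeight]
  field_simp
  ring

theorem gapWeight_nonneg (hT : 0 ≤ T) (ht : 0 ≤ t) (ht' : t < 2 * T) : 0 ≤ gapWeight T t :=
  div_nonneg (mul_nonneg hT ht) (sub_pos.2 ht').le

theorem gapWeight_le_gapWeight {t' : ℝ} (ht : t ≤ t') (ht' : t' < 2 * T) :
    gapWeight T t ≤ gapWeight T t' := by
  rw [gapWeight, gapWeight, div_le_div_iff₀ (by linarith) (by linarith)]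
  nlinarith [sq_nonneg T]

theorem discrim_weight_increments (ht : 2 * T - t ≠ 0) (hta : 2 * T - (t + a) ≠ 0) :
    discrim (distWeight T t - distWeight T (t + a))
      (gapWeight T (t + a) - gapWeight T t - 2 * a * distWeight T (t + a))
      (a * gapWeight T (t + a) - a ^ 2 * distWeight T (t + a)) = 0 := by
  simp only [discrim, gapWeight, distWeight]
  generalize hu : 2 * T - t = u at *
  generalize hv : 2 * T - (t + a) = v at *
  obtain rfl : t = 2 * T - u := by linarith
  obtain rfl : a = u - v := by linarith
  field_simp
  ring

theorem mul_distWeight_lt_gapWeight {s : ℝ} (hT : 0 < T) (hs : 0 < s) (hsT : s ≤ T)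
    (has : a ≤ s) :
    a * distWeight T s < gapWeight T s := by
  have hv : 0 < 2 * T - s := by linarith
  rw [gapWeight, distWeight, mul_div_assoc', div_lt_div_iff₀ (by positivity) hv, pow_two]
  have h₁ : a * (T - s) * (T * (2 * T - s)) ≤ s * (T - s) * (T * (2 * T - s)) :=
    mul_le_mul_of_nonneg_right (mul_le_mul_of_nonneg_right has (by linarith)) (by positivity)
  have h₂ : 0 < T * s * (2 * T - s) * T := by positivity
  linear_combination h₁ + h₂

section InnerProduct

variable {V : Type*} [NormedAddCommGroup V] [InnerProductSpace ℝ V]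

theorem inner_quadratic_nonneg {c₁ c₂ c₃ : ℝ} (h₃ : 0 < c₃) (hdisc : discrim c₁ c₂ c₃ ≤ 0)
    (u v : V) : 0 ≤ c₁ * ‖u‖ ^ 2 - c₂ * ⟪u, v⟫ + c₃ * ‖v‖ ^ 2 := by
  have key : 4 * c₃ * (c₁ * ‖u‖ ^ 2 - c₂ * ⟪u, v⟫ + c₃ * ‖v‖ ^ 2) =
      ‖c₂ • u - (2 * c₃) • v‖ ^ 2 - discrim c₁ c₂ c₃ * ‖u‖ ^ 2 := by
    rw [discrim, norm_sub_sq_real, norm_smul, norm_smul, real_inner_smul_left,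
      real_inner_smul_right, mul_pow, mul_pow, Real.norm_eq_abs, Real.norm_eq_abs, sq_abs, sq_abs]
    ring
  refine nonneg_of_mul_nonneg_right ?_ (by positivity : 0 < 4 * c₃)
  rw [key, sub_nonneg]
  exact (mul_nonpos_of_nonpos_of_nonneg hdisc (sq_nonneg _)).trans (sq_nonneg _)

def proxLyapunov (T t δ : ℝ) (p : V) : ℝ := gapWeight T t * δ + distWeight T t * ‖p‖ ^ 2

-- At `t = 0` the gap weight vanishes and `fx` is unconstrained: in the application it is
-- `(F x₀).toReal`, a junk value when `F x₀ = ⊤`.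
theorem proxLyapunov_step_le {x x' y g : V} {fx fx' fy : ℝ} (hT : 0 < T) (ht : 0 ≤ t)
    (ha : 0 < a) (hta : t + a ≤ T) (hx' : x' = x - a • g) (hy : fx' + ⟪g, y - x'⟫ ≤ fy)
    (hx : 0 < t → fx' + ⟪g, x - x'⟫ ≤ fx) :
    proxLyapunov T (t + a) (fx' - fy) (x' - y) ≤ proxLyapunov T t (fx - fy) (x - y) := by
  have hx'y : x' - y = (x - y) - a • g := by rw [hx']; abel
  have hxx' : x - x' = a • g := by rw [hx']; abel
  have hgap : fx' - fy ≤ ⟪x - y, g⟫ - a * ‖g‖ ^ 2 := by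
    have : ⟪g, y - x'⟫ = -⟪g, x' - y⟫ := by rw [← inner_neg_right, neg_sub]
    rw [this, hx'y, inner_sub_right, real_inner_smul_right, real_inner_self_eq_norm_sq,
      real_inner_comm] at hy
    linarith
  have hdesc : gapWeight T t * (fx' - fy) ≤ gapWeight T t * (fx - fy - a * ‖g‖ ^ 2) := by
    rcases ht.eq_or_lt with rfl | ht
    · simp
    · have := hx ht
      rw [hxx', real_inner_smul_right, real_inner_self_eq_norm_sq] at this
      exact mul_le_mul_of_nonneg_left (by linarith) (gapWeight_nonneg hT.le ht.le (by linarith))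
  have hmono : gapWeight T t ≤ gapWeight T (t + a) :=
    gapWeight_le_gapWeight (by linarith) (by linarith)
  have hc₃ : 0 < a * gapWeight T (t + a) - a ^ 2 * distWeight T (t + a) := by
    have := mul_distWeight_lt_gapWeight hT (by linarith : 0 < t + a) hta (by linarith : a ≤ t + a)
    rw [pow_two, mul_assoc, ← mul_sub]
    exact mul_pos ha (sub_pos.2 this)
  have hquad := inner_quadratic_nonneg hc₃
    (discrim_weight_increments (by linarith) (by linarith)).le (x - y) g
  have hgap' := mul_le_mul_of_nonneg_left hgap (sub_nonneg.2 hmono)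
  rw [proxLyapunov, proxLyapunov, hx'y, norm_sub_sq_real, norm_smul, real_inner_smul_right,
    Real.norm_eq_abs, mul_pow, sq_abs]
  linear_combination hgap' + hdesc + hquad

theorem IsSubgradientAt.ne_top {f : V → EReal} {x g y : V} (h : IsSubgradientAt f x g)
    (hy : f y ≠ ⊤) : f x ≠ ⊤ := by
  intro hx
  have := h y
  rw [hx, EReal.top_add_coe, top_le_iff] at this
  exact hy this

theorem IsSubgradientAt.toReal_add_inner_le {f : V → EReal} {x g y : V}
    (h : IsSubgradientAt f x g) (hx : f x ≠ ⊥) (hy : f y ≠ ⊤) :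
    (f x).toReal + ⟪g, y - x⟫ ≤ (f y).toReal := by
  have hle := h y
  rw [← EReal.coe_toReal (h.ne_top hy) hx, ← EReal.coe_add] at hle
  rw [← EReal.coe_le_coe_iff, EReal.coe_toReal hy (ne_bot_of_le_ne_bot (EReal.coe_ne_bot _) hle)]
  exact hle

theorem proxPoint_sum_mul_sub_le {N : ℕ} {α f : ℕ → ℝ} {x g : ℕ → V} {y : V} {fy : ℝ}
    (hα : ∀ k, 1 ≤ k → k ≤ N → 0 < α k)
    (hx : ∀ k, 1 ≤ k → k ≤ N → x k = x (k - 1) - α k • g k)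
    (hy : ∀ k, 1 ≤ k → k ≤ N → f k + ⟪g k, y - x k⟫ ≤ fy)
    (hdesc : ∀ k, 2 ≤ k → k ≤ N → f k + ⟪g k, x (k - 1) - x k⟫ ≤ f (k - 1)) :
    (∑ k ∈ Icc 1 N, α k) * (f N - fy) ≤ ‖x 0 - y‖ ^ 2 / 4 := by
  rcases N.eq_zero_or_pos with rfl | hN
  · simp only [zero_lt_one, Icc_eq_empty_of_lt, sum_empty, zero_mul]
    positivity
  set T := ∑ k ∈ Icc 1 N, α k
  set t : ℕ → ℝ := fun m => ∑ k ∈ Icc 1 m, α k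
  set Φ : ℕ → ℝ := fun m => proxLyapunov T (t m) (f m - fy) (x m - y)
  have ht_succ : ∀ m, t (m + 1) = t m + α (m + 1) := fun m => sum_Icc_succ_top (by omega) α
  have ht_nonneg : ∀ m ≤ N, 0 ≤ t m := fun m hm =>
    sum_nonneg fun k hk => (hα k (mem_Icc.1 hk).1 ((mem_Icc.1 hk).2.trans hm)).le
  have ht_le : ∀ m ≤ N, t m ≤ T := fun m hm =>
    sum_le_sum_of_subset_of_nonneg (Icc_subset_Icc_right hm) fun k hk _ =>
      (hα k (mem_Icc.1 hk).1 (mem_Icc.1 hk).2).le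
  have hT : 0 < T := sum_pos (fun k hk => hα k (mem_Icc.1 hk).1 (mem_Icc.1 hk).2)
    ⟨1, mem_Icc.2 ⟨le_rfl, hN⟩⟩
  have hΦ_succ : ∀ m < N, Φ (m + 1) ≤ Φ m := by
    intro m hm
    simp only [Φ, ht_succ]
    refine proxLyapunov_step_le hT (ht_nonneg m hm.le) (hα _ (by omega) hm)
      (ht_succ m ▸ ht_le _ hm) (by simpa using hx (m + 1) (by omega) hm) (hy _ (by omega) hm)
      fun htm => ?_
    have hm₀ : m ≠ 0 := by rintro rfl; simp [t] at htm
    simpa using hdesc (m + 1) (by omega) hm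
  have hΦ_le : ∀ m ≤ N, Φ m ≤ Φ 0 := by
    intro m hm
    induction m with
    | zero => exact le_rfl
    | succ m ih => exact (hΦ_succ m hm).trans (ih (by omega))
  calc T * (f N - fy) = proxLyapunov T T (f N - fy) (x N - y) := by
        rw [proxLyapunov, gapWeight_self hT.ne', distWeight_self, zero_mul, add_zero]
    _ ≤ Φ 0 := hΦ_le N le_rfl
    _ = ‖x 0 - y‖ ^ 2 / 4 := by
        simp only [Φ, t, proxLyapunov, Icc_eq_empty_of_lt zero_lt_one, sum_empty, gapWeight_zero,
          distWeight_zero hT.ne']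
        ring

end InnerProduct

end

theorem stmt10_general (N : ℕ) (hN : 1 ≤ N) (R : ℝ) (α : ℕ → ℝ)
    (hα : ∀ k, 1 ≤ k → k ≤ N → 0 < α k)
    (F : E → EReal) (hF : IsProperClosedConvex F)
    (xstar : E) (hmin : ∀ y, F xstar ≤ F y)
    (x : ℕ → E) (g : ℕ → E) (hx0 : ‖x 0 - xstar‖ ≤ R)
    (hstep : ∀ k, 1 ≤ k → k ≤ N →
      IsSubgradientAt F (x k) (g k) ∧ x k = x (k - 1) - α k • g k) :
    F (x N) - F xstar ≤ ((R ^ 2 / (4 * ∑ k ∈ Icc 1 N, α k) : ℝ) : EReal) := by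
  obtain ⟨⟨z, hz⟩, hbot, -, -⟩ := hF
  have hstar : F xstar ≠ ⊤ := fun h => hz (top_le_iff.mp (h ▸ hmin z))
  have hfin : ∀ k, 1 ≤ k → k ≤ N → F (x k) ≠ ⊤ := fun k h₁ h₂ => (hstep k h₁ h₂).1.ne_top hstar
  have hT : 0 < ∑ k ∈ Icc 1 N, α k := sum_pos (fun k hk => hα k (mem_Icc.1 hk).1 (mem_Icc.1 hk).2)
    ⟨1, mem_Icc.2 ⟨le_rfl, hN⟩⟩
  have hgap := proxPoint_sum_mul_sub_le hα (fun k h₁ h₂ => (hstep k h₁ h₂).2)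
    (fun k h₁ h₂ => (hstep k h₁ h₂).1.toReal_add_inner_le (hbot _) hstar)
    (fun k h₁ h₂ => (hstep k (by omega) h₂).1.toReal_add_inner_le (hbot _)
      (hfin _ (by omega) (by omega)))
  have hR : ‖x 0 - xstar‖ ^ 2 ≤ R ^ 2 := pow_le_pow_left₀ (norm_nonneg _) hx0 2
  rw [← EReal.coe_toReal (hfin N hN le_rfl) (hbot _), ← EReal.coe_toReal hstar (hbot _),
    ← EReal.coe_sub, EReal.coe_le_coe_iff, le_div_iff₀ (by positivity)]
  linarith

/-- Tight worst-case bound for the proximal point algorithm: `x_k = prox_{α_k F}(x_{k-1})`,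
written equivalently as the implicit subgradient step `x_k = x_{k-1} − α_k g_k` with
`g_k ∈ ∂F(x_k)`, satisfies `F(x_N) − F(x_*) ≤ R²/(4 Σ α_k)`. -/
theorem stmt10 (N : ℕ) (hN : 1 ≤ N) (R : ℝ) (hR : 0 < R) (α : ℕ → ℝ)
    (hα : ∀ k, 1 ≤ k → k ≤ N → 0 < α k)
    (F : E → EReal) (hF : IsProperClosedConvex F)
    (xstar : E) (hmin : ∀ y, F xstar ≤ F y)
    (x : ℕ → E) (g : ℕ → E) (hx0 : ‖x 0 - xstar‖ ≤ R)
    (hstep : ∀ k, 1 ≤ k → k ≤ N →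
      IsSubgradientAt F (x k) (g k) ∧ x k = x (k - 1) - α k • g k) :
    F (x N) - F xstar ≤ ((R ^ 2 / (4 * ∑ k ∈ Icc 1 N, α k) : ℝ) : EReal) :=
  stmt10_general N hN R α hα F hF xstar hmin x g hx0 hstep
end

section
/- Let {(x_i, g_i, f_i)}_{i∈I} be a finite family in E × E × ℝ and M > 0. There exists a support function σ of a closed convex set, with all subgradients of norm at most M, satisfying σ(x_i) = f_i and g_i ∈ ∂σ(x_i) for all i ∈ I if and only if for all i, j ∈ I: ⟨g_i, x_i⟩ − f_i = 0, ⟨g_i − g_j, x_j⟩ ≤ 0, and ‖g_i‖ ≤ M. -/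
private lemma bddAbove_inner_image {E : Type*} [NormedAddCommGroup E] [InnerProductSpace ℝ E]
    {Q : Set E} {M : ℝ} (hQ : Q ⊆ Metric.closedBall (0 : E) M) (y : E) :
    BddAbove ((fun z => (inner ℝ y z : ℝ)) '' Q) := by
  refine ⟨‖y‖ * M, ?_⟩
  rintro r ⟨z, hz, rfl⟩
  have hz' : ‖z‖ ≤ M := by simpa using hQ hz
  calc (inner ℝ y z : ℝ) ≤ ‖y‖ * ‖z‖ := real_inner_le_norm y z
    _ ≤ ‖y‖ * M := by
        have := norm_nonneg y
        nlinarith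

/-- Interpolation by the support function `σ_Q(s) = sup_{z ∈ Q} ⟨s, z⟩` of a closed convex
set `Q` contained in the ball of radius `M` (so that all subgradients of `σ_Q` have norm
at most `M`): the data `(x_i, g_i, f_i)` is interpolable, with `σ_Q(x_i) = f_i` and `g_i`
a subgradient of `σ_Q` at `x_i`, iff `⟨g_i, x_i⟩ − f_i = 0`, `⟨g_i − g_j, x_j⟩ ≤ 0` and
`‖g_i‖ ≤ M` for all `i, j`. -/
theorem stmt18 {E : Type*} [NormedAddCommGroup E] [InnerProductSpace ℝ E]
    [FiniteDimensional ℝ E] {ι : Type*} [Fintype ι] (M : ℝ) (hM : 0 < M)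
    (x g : ι → E) (f : ι → ℝ) :
    (∃ Q : Set E, IsClosed Q ∧ Convex ℝ Q ∧ Q.Nonempty ∧
        Q ⊆ Metric.closedBall (0 : E) M ∧
        ∀ i, sSup ((fun z => (inner ℝ (x i) z : ℝ)) '' Q) = f i ∧
          ∀ y : E, sSup ((fun z => (inner ℝ (x i) z : ℝ)) '' Q) + (inner ℝ (g i) (y - x i) : ℝ) ≤
            sSup ((fun z => (inner ℝ y z : ℝ)) '' Q)) ↔
      ∀ i j, (inner ℝ (g i) (x i) : ℝ) - f i = 0 ∧
        (inner ℝ (g i - g j) (x j) : ℝ) ≤ 0 ∧ ‖g i‖ ≤ M := by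
  constructor
  · rintro ⟨Q, hcl, hcv, hne, hball, h⟩
    have bdd := bddAbove_inner_image hball
    have hle : ∀ (y z : E), z ∈ Q → (inner ℝ y z : ℝ) ≤ sSup ((fun z => (inner ℝ y z : ℝ)) '' Q) :=
      fun y z hz => le_csSup (bdd y) ⟨z, hz, rfl⟩
    have hsub : ∀ a b : E, sSup ((fun z => (inner ℝ (a + b) z : ℝ)) '' Q) ≤
        sSup ((fun z => (inner ℝ a z : ℝ)) '' Q) + sSup ((fun z => (inner ℝ b z : ℝ)) '' Q) := by
      intro a b
      refine csSup_le (hne.image _) ?_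
      rintro r ⟨z, hz, rfl⟩
      simp only [inner_add_left]
      exact add_le_add (hle a z hz) (hle b z hz)
    have hzero : sSup ((fun z => (inner ℝ (0 : E) z : ℝ)) '' Q) = 0 := by
      have himg : ((fun z => (inner ℝ (0 : E) z : ℝ)) '' Q) = {0} := by
        apply Set.Subset.antisymm
        · rintro r ⟨z, hz, rfl⟩; simp
        · rintro r hr
          obtain ⟨z, hz⟩ := hne
          simp only [Set.mem_singleton_iff] at hr
          exact ⟨z, hz, by simp [hr]⟩
      rw [himg, csSup_singleton]
    have key : ∀ i, (inner ℝ (g i) (x i) : ℝ) = f i := by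
      intro i
      obtain ⟨hfi, hgi⟩ := h i
      have hlow := hgi 0
      rw [hfi, hzero] at hlow
      have hlow' : f i - (inner ℝ (g i) (x i) : ℝ) ≤ 0 := by
        simpa [inner_sub_right] using hlow
      have hup := hgi (x i + x i)
      rw [hfi] at hup
      have h2f := hsub (x i) (x i)
      rw [hfi] at h2f
      have harg : (inner ℝ (g i) (x i + x i - x i) : ℝ) = inner ℝ (g i) (x i) := by
        rw [add_sub_cancel_right]
      rw [harg] at hup
      linarith
    intro i j
    obtain ⟨hfi, hgi⟩ := h i
    obtain ⟨hfj, _⟩ := h j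
    refine ⟨by rw [key i]; ring, ?_, ?_⟩
    · have hup := hgi (x j)
      rw [hfi, hfj] at hup
      rw [inner_sub_right, key i] at hup
      rw [inner_sub_left]
      linarith [key j]
    · have hup := hgi (x i + g i)
      rw [hfi] at hup
      have harg : (inner ℝ (g i) (x i + g i - x i) : ℝ) = inner ℝ (g i) (g i) := by
        rw [add_sub_cancel_left]
      rw [harg] at hup
      have h2f := hsub (x i) (g i)
      rw [hfi] at h2f
      have hσg : sSup ((fun z => (inner ℝ (g i) z : ℝ)) '' Q) ≤ ‖g i‖ * M := by
        refine csSup_le (hne.image _) ?_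
        rintro r ⟨z, hz, rfl⟩
        have hz' : ‖z‖ ≤ M := by simpa using hball hz
        calc (inner ℝ (g i) z : ℝ) ≤ ‖g i‖ * ‖z‖ := real_inner_le_norm _ _
          _ ≤ ‖g i‖ * M := by nlinarith [norm_nonneg (g i)]
      have hsq : ‖g i‖ ^ 2 ≤ ‖g i‖ * M := by
        have := real_inner_self_eq_norm_sq (g i)
        nlinarith
      nlinarith [norm_nonneg (g i)]
  · intro H
    by_cases hι : Nonempty ι
    · obtain ⟨i0⟩ := hι
      set Q := convexHull ℝ (Set.range g) with hQdef
      have hQball : Q ⊆ Metric.closedBall 0 M := by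
        apply convexHull_min ?_ (convex_closedBall 0 M)
        rintro z ⟨i, rfl⟩
        simpa using (H i i).2.2
      have hgmem : ∀ i, g i ∈ Q := fun i => subset_convexHull ℝ _ ⟨i, rfl⟩
      have hkey : ∀ i, sSup ((fun z => (inner ℝ (x i) z : ℝ)) '' Q) = f i := by
        intro i
        apply le_antisymm
        · refine csSup_le (Set.Nonempty.image _ ⟨g i0, hgmem i0⟩) ?_
          rintro r ⟨z, hz, rfl⟩
          have hmem : z ∈ {w : E | (inner ℝ (x i) w : ℝ) ≤ f i} := by
            refine convexHull_min ?_ ?_ hz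
            · rintro w ⟨j, rfl⟩
              have h2 := (H j i).2.1
              have h1 := (H i i).1
              rw [inner_sub_left] at h2
              have hc : (inner ℝ (x i) (g j) : ℝ) = inner ℝ (g j) (x i) := real_inner_comm _ _
              simp only [Set.mem_setOf_eq]
              linarith
            · exact convex_halfSpace_le
                ⟨fun a b => inner_add_right _ _ _, fun c a => real_inner_smul_right _ _ _⟩ (f i)
          exact hmem
        · have hval : (inner ℝ (x i) (g i) : ℝ) = f i := by
            rw [real_inner_comm]
            linarith [(H i i).1]
          exact hval ▸ le_csSup (bddAbove_inner_image hQball (x i)) ⟨g i, hgmem i, rfl⟩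
      refine ⟨Q, ((Set.finite_range g).isCompact_convexHull (𝕜 := ℝ)).isClosed,
        convex_convexHull ℝ _, ⟨g i0, hgmem i0⟩, hQball, fun i => ⟨hkey i, ?_⟩⟩
      intro y
      rw [hkey i]
      have heq : f i + (inner ℝ (g i) (y - x i) : ℝ) = inner ℝ y (g i) := by
        rw [inner_sub_right, real_inner_comm]
        linarith [(H i i).1]
      rw [heq]
      exact le_csSup (bddAbove_inner_image hQball y) ⟨g i, hgmem i, rfl⟩
    · refine ⟨{0}, isClosed_singleton, convex_singleton 0, ⟨0, rfl⟩, ?_, fun i => absurd ⟨i⟩ hι⟩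
      intro z hz
      simp only [Set.mem_singleton_iff] at hz
      simp [hz, hM.le]
end

section
/- Let Q₁, Q₂ ⊆ E be closed convex sets with nonempty intersection and let f(x) = max(dist(x, Q₁), dist(x, Q₂)). If x ∈ Q₁ and x ∉ Q₂, then the unit vector g = (x − Π_{Q₂}(x)) / ‖x − Π_{Q₂}(x)‖ is a subgradient of f at x, and consequently the alternate-projection update x⁺ = Π_{Q₂}(x) coincides with a subgradient step x⁺ = x − t g with step size t = ‖x − Π_{Q₂}(x)‖ = f(x). -/
/-!
If `p` is a nearest point of the convex set `Q₂` to `x`, the variational inequality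
`⟪x - p, q - p⟫ ≤ 0` for `q ∈ Q₂` says that `Q₂` lies in the half-space `⟪g, · - p⟫ ≤ 0`,
`g = (x - p)/‖x - p‖`. Hence for every `y` and `q ∈ Q₂`,
`‖y - q‖ ≥ ⟪g, y - q⟫ ≥ ⟪g, y - p⟫ = ‖x - p‖ + ⟪g, y - x⟫`, i.e. `g` is a subgradient of
`dist(·, Q₂)` at `x`. Since `x ∈ Q₁`, `f` agrees with `dist(·, Q₂)` at `x` and dominates it
elsewhere, so `g` is also a subgradient of `f`.
-/

section

open Metric
open scoped InnerProductSpace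

variable {E : Type*} [NormedAddCommGroup E] {s : Set E} {x p : E}

theorem Metric.infDist_eq_norm_sub_of_forall_norm_sub_le (hp : p ∈ s)
    (hmin : ∀ y ∈ s, ‖x - p‖ ≤ ‖x - y‖) : infDist x s = ‖x - p‖ :=
  le_antisymm ((infDist_le_dist_of_mem hp).trans_eq (dist_eq_norm x p))
    ((le_infDist ⟨p, hp⟩).2 fun y hy => (hmin y hy).trans_eq (dist_eq_norm x y).symm)

variable [InnerProductSpace ℝ E]

theorem real_inner_inv_norm_smul_self (v : E) : ⟪‖v‖⁻¹ • v, v⟫_ℝ = ‖v‖ := by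
  rw [real_inner_smul_self_left, ← mul_assoc, inv_mul_mul_self]

theorem real_inner_inv_norm_smul_le_norm (v w : E) : ⟪‖v‖⁻¹ • v, w⟫_ℝ ≤ ‖w‖ :=
  (real_inner_le_norm _ _).trans <| mul_le_of_le_one_left (norm_nonneg w) <|
    mem_closedBall_zero_iff.1 (inv_norm_smul_mem_unitClosedBall v)

theorem real_inner_sub_le_zero_of_forall_norm_sub_le (hs : Convex ℝ s) (hp : p ∈ s)
    (hmin : ∀ y ∈ s, ‖x - p‖ ≤ ‖x - y‖) {q : E} (hq : q ∈ s) : ⟪x - p, q - p⟫_ℝ ≤ 0 := by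
  have : Nonempty s := ⟨⟨p, hp⟩⟩
  refine (norm_eq_iInf_iff_real_inner_le_zero hs hp).1 ?_ q hq
  exact le_antisymm (le_ciInf fun w => hmin w w.2)
    (ciInf_le ⟨0, Set.forall_mem_range.2 fun _ => norm_nonneg _⟩ (⟨p, hp⟩ : s))

theorem Metric.infDist_add_inner_le_infDist_of_forall_norm_sub_le (hs : Convex ℝ s)
    (hp : p ∈ s) (hmin : ∀ y ∈ s, ‖x - p‖ ≤ ‖x - y‖) (y : E) :
    infDist x s + ⟪‖x - p‖⁻¹ • (x - p), y - x⟫_ℝ ≤ infDist y s := by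
  set g := ‖x - p‖⁻¹ • (x - p)
  rw [infDist_eq_norm_sub_of_forall_norm_sub_le hp hmin]
  refine (le_infDist ⟨p, hp⟩).2 fun q hq => ?_
  have hpq : 0 ≤ ⟪g, p - q⟫_ℝ := by
    rw [real_inner_smul_left, ← neg_sub q p, inner_neg_right]
    exact mul_nonneg (inv_nonneg.2 (norm_nonneg _))
      (neg_nonneg.2 (real_inner_sub_le_zero_of_forall_norm_sub_le hs hp hmin hq))
  calc ‖x - p‖ + ⟪g, y - x⟫_ℝ ≤ ⟪g, y - x⟫_ℝ + ⟪g, x - p⟫_ℝ + ⟪g, p - q⟫_ℝ := by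
        rw [real_inner_inv_norm_smul_self]; linarith
    _ = ⟪g, y - q⟫_ℝ := by rw [← inner_add_right, ← inner_add_right]; congr 1; abel
    _ ≤ ‖y - q‖ := real_inner_inv_norm_smul_le_norm _ _
    _ = dist y q := (dist_eq_norm y q).symm

end

theorem stmt19_general {E : Type*} [NormedAddCommGroup E] [InnerProductSpace ℝ E]
    (Q₁ Q₂ : Set E)
    (hc₂ : Convex ℝ Q₂)
    (x p : E) (hx₁ : x ∈ Q₁) (hx₂ : x ∉ Q₂)
    (hp : p ∈ Q₂) (hproj : ∀ y ∈ Q₂, ‖x - p‖ ≤ ‖x - y‖) :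
    let f : E → ℝ := fun z => max (Metric.infDist z Q₁) (Metric.infDist z Q₂)
    let g : E := ‖x - p‖⁻¹ • (x - p)
    (∀ y, f x + (inner ℝ g (y - x) : ℝ) ≤ f y) ∧ f x = ‖x - p‖ ∧ p = x - f x • g := by
  intro f g
  have hdist : Metric.infDist x Q₂ = ‖x - p‖ :=
    Metric.infDist_eq_norm_sub_of_forall_norm_sub_le hp hproj
  have hfx : f x = ‖x - p‖ := by
    simp only [f]
    rw [Metric.infDist_zero_of_mem hx₁, hdist]
    exact max_eq_right (norm_nonneg _)
  refine ⟨fun y => ?_, hfx, ?_⟩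
  · rw [hfx, ← hdist]
    exact (Metric.infDist_add_inner_le_infDist_of_forall_norm_sub_le hc₂ hp hproj y).trans
      (le_max_right _ _)
  · have hxp : x - p ≠ 0 := sub_ne_zero.2 fun h => hx₂ (h ▸ hp)
    rw [hfx, smul_inv_smul₀ (norm_ne_zero_iff.2 hxp), sub_sub_cancel]

/-- The alternate projection step as a subgradient step: if `x ∈ Q₁ \ Q₂` and `p` is the
Euclidean projection of `x` onto `Q₂`, then the unit vector `g = (x − p)/‖x − p‖` is a
subgradient at `x` of `f(z) = max(dist(z, Q₁), dist(z, Q₂))`, and the update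
`x⁺ = Π_{Q₂}(x) = p` coincides with the subgradient step `x − f(x) • g`
with step size `f(x) = ‖x − p‖`. -/
theorem stmt19 {E : Type*} [NormedAddCommGroup E] [InnerProductSpace ℝ E]
    [FiniteDimensional ℝ E] (Q₁ Q₂ : Set E)
    (h₁ : IsClosed Q₁) (hc₁ : Convex ℝ Q₁) (h₂ : IsClosed Q₂) (hc₂ : Convex ℝ Q₂)
    (hne : (Q₁ ∩ Q₂).Nonempty) (x p : E) (hx₁ : x ∈ Q₁) (hx₂ : x ∉ Q₂)
    (hp : p ∈ Q₂) (hproj : ∀ y ∈ Q₂, ‖x - p‖ ≤ ‖x - y‖) :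
    let f : E → ℝ := fun z => max (Metric.infDist z Q₁) (Metric.infDist z Q₂)
    let g : E := ‖x - p‖⁻¹ • (x - p)
    (∀ y, f x + (inner ℝ g (y - x) : ℝ) ≤ f y) ∧ f x = ‖x - p‖ ∧ p = x - f x • g :=
  stmt19_general Q₁ Q₂ hc₂ x p hx₁ hx₂ hp hproj
end
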